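/- Let σ and τ be functions from a finite set S of n distinct elements to the integers such that σ is a bijection onto {1,…,n} and |τ(x) − σ(x)| < 4w for all x ∈ S. Let σ' be any bijection from S onto {1,…,n} that sorts the elements in non-decreasing order of τ (i.e., τ(x) < τ(y) implies σ'(x) < σ'(y)). Then |σ'(x) − τ(x)| < 4w for all x ∈ S. -/

import Mathlib

/-!
Compose the two rankings into an injection `σ ∘ σ'⁻¹` of the positions. By pigeonhole, the
`k + 1` elements ranked at most `k` by `σ'` cannot all be ranked below `k` by `σ`, so some `y`
with `σ' y ≤ σ' x` has `σ' x ≤ σ y`; since `σ'` sorts by `τ`, also `τ y ≤ τ x`, and hence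
`σ' x ≤ σ y < τ y + 4w ≤ τ x + 4w`. The other bound is the order dual.
-/

open Finset

section Pigeonhole

variable {β : Type*} [LinearOrder β]

theorem Function.Injective.exists_le_le_apply [LocallyFiniteOrderBot β] {f : β → β}
    (hf : f.Injective) (i : β) : ∃ j ≤ i, i ≤ f j := by
  classical
  by_contra! h
  have hmaps : Set.MapsTo f (Iic i) (Iio i) := fun j hj => mem_Iio.2 (h j (mem_Iic.1 hj))
  have hcard := card_le_card_of_injOn f hmaps hf.injOn
  rw [← Iio_insert, card_insert_of_notMem (by simp)] at hcard
  omega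

theorem Function.Injective.exists_le_apply_le [LocallyFiniteOrderTop β] {f : β → β}
    (hf : f.Injective) (i : β) : ∃ j, i ≤ j ∧ f j ≤ i :=
  (show (OrderDual.toDual ∘ f ∘ OrderDual.ofDual).Injective from hf).exists_le_le_apply
    (OrderDual.toDual i)

variable {α : Type*}

theorem Equiv.exists_apply_le_le_apply [LocallyFiniteOrderBot β] (σ σ' : α ≃ β) (i : β) :
    ∃ y, σ' y ≤ i ∧ i ≤ σ y := by
  obtain ⟨j, hji, hij⟩ := (σ.injective.comp σ'.symm.injective).exists_le_le_apply i
  exact ⟨σ'.symm j, by simpa using hji, hij⟩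

theorem Equiv.exists_le_apply_apply_le [LocallyFiniteOrderTop β] (σ σ' : α ≃ β) (i : β) :
    ∃ y, i ≤ σ' y ∧ σ y ≤ i := by
  obtain ⟨j, hij, hji⟩ := (σ.injective.comp σ'.symm.injective).exists_le_apply_le i
  exact ⟨σ'.symm j, by simpa using hij, hji⟩

end Pigeonhole

theorem sort_by_approx_rank_general {α : Type*} (n : ℕ)
    (σ σ' : α ≃ Fin n) (τ : α → ℤ) (w : ℝ)
    (hτσ : ∀ x : α, |(τ x : ℝ) - (((σ x : ℕ) : ℝ) + 1)| < 4 * w)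
    (hsort : ∀ x y : α, τ x < τ y → σ' x < σ' y) :
    ∀ x : α, |(((σ' x : ℕ) : ℝ) + 1) - (τ x : ℝ)| < 4 * w := by
  intro x
  rw [abs_sub_lt_iff]
  constructor
  · obtain ⟨y, hyx, hxy⟩ := σ.exists_apply_le_le_apply σ' (σ' x)
    have hτ : (τ y : ℝ) ≤ τ x := by exact_mod_cast not_lt.1 fun h => (hsort x y h).not_ge hyx
    have hσ : ((σ' x : ℕ) : ℝ) ≤ (σ y : ℕ) := by exact_mod_cast hxy
    linarith [(abs_sub_lt_iff.1 (hτσ y)).2]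
  · obtain ⟨y, hxy, hyx⟩ := σ.exists_le_apply_apply_le σ' (σ' x)
    have hτ : (τ x : ℝ) ≤ τ y := by exact_mod_cast not_lt.1 fun h => (hsort y x h).not_ge hxy
    have hσ : ((σ y : ℕ) : ℝ) ≤ (σ' x : ℕ) := by exact_mod_cast hyx
    linarith [(abs_sub_lt_iff.1 (hτσ y)).1]

/-- If σ is a bijection onto positions {1,…,n}, τ approximates the positions within 4w,
and σ' re-sorts the elements in non-decreasing order of τ, then σ' also stays within 4w
of τ. -/
theorem sort_by_approx_rank {α : Type*} [Fintype α] (n : ℕ)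
    (σ σ' : α ≃ Fin n) (τ : α → ℤ) (w : ℝ) (hw : 0 < w)
    (hτσ : ∀ x : α, |(τ x : ℝ) - (((σ x : ℕ) : ℝ) + 1)| < 4 * w)
    (hsort : ∀ x y : α, τ x < τ y → σ' x < σ' y) :
    ∀ x : α, |(((σ' x : ℕ) : ℝ) + 1) - (τ x : ℝ)| < 4 * w :=
  sort_by_approx_rank_general n σ σ' τ w hτσ hsort
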